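/- If ‖Z/Z̃ − 1‖_{L²(π_Z)} ≤ 1 − ε for some ε ∈ (0,1), then W(π_Z, π_{Z̃}) ≤ (2/ε) |π_Z|^{(2)} ‖Z/Z̃ − 1‖_{L²(π_Z)}. -/

import Mathlib

set_option maxHeartbeats 1000000


open MeasureTheory Real

noncomputable section

/-- Normalizing constant `C_Z = ∫ exp(-Φ)/Z dμ`. -/
def CZ {Θ : Type*} [MeasurableSpace Θ] (μ : Measure Θ) (Φ Z : Θ → ℝ) : ℝ :=
  ∫ θ, Real.exp (-Φ θ) / Z θ ∂μ

/-- The doubly-intractable posterior `π_Z` with `μ`-density `exp(-Φ)/(Z C_Z)`. -/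
def post {Θ : Type*} [MeasurableSpace Θ] (μ : Measure Θ) (Φ Z : Θ → ℝ) : Measure Θ :=
  (ENNReal.ofReal (CZ μ Φ Z))⁻¹ •
    μ.withDensity (fun θ => ENNReal.ofReal (Real.exp (-Φ θ) / Z θ))

/-- Total variation distance `sup_{|f|_∞ ≤ 1} |E_{ν₁} f - E_{ν₂} f|`. -/
def tvDist {Θ : Type*} [MeasurableSpace Θ] (ν₁ ν₂ : Measure Θ) : ℝ :=
  ⨆ f : {f : Θ → ℝ // Measurable f ∧ ∀ θ, |f θ| ≤ 1},
    |(∫ θ, f.1 θ ∂ν₁) - ∫ θ, f.1 θ ∂ν₂|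

/-- 1-Wasserstein distance via Kantorovich–Rubinstein duality. -/
def wass {Θ : Type*} [MeasurableSpace Θ] [PseudoMetricSpace Θ] (ν₁ ν₂ : Measure Θ) : ℝ :=
  ⨆ f : {f : Θ → ℝ // LipschitzWith 1 f},
    |(∫ θ, f.1 θ ∂ν₁) - ∫ θ, f.1 θ ∂ν₂|

/-- The moment quantity `|ν|^{(p)} = inf_{θ₀} (∫ d(θ₀,θ)^p ν(dθ))^{1/p}`. -/
def momp {Θ : Type*} [MeasurableSpace Θ] [PseudoMetricSpace Θ] (ν : Measure Θ) (p : ℝ) : ℝ :=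
  ⨅ θ₀ : Θ, (∫ θ, dist θ₀ θ ^ p ∂ν) ^ (1 / p)

/-- Integrals against the posterior. -/
lemma integral_post {Θ : Type*} [MeasurableSpace Θ] (μ : Measure Θ) {Φ Z : Θ → ℝ}
    (hnn : ∀ θ, 0 ≤ Real.exp (-Φ θ) / Z θ)
    (hmeas : Measurable (fun θ => Real.exp (-Φ θ) / Z θ))
    (hC : 0 < CZ μ Φ Z) (g : Θ → ℝ) :
    ∫ θ, g θ ∂(post μ Φ Z) = (CZ μ Φ Z)⁻¹ * ∫ θ, (Real.exp (-Φ θ) / Z θ) * g θ ∂μ := by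
  have hd : (fun θ => ENNReal.ofReal (Real.exp (-Φ θ) / Z θ))
      = fun θ => ((Real.toNNReal (Real.exp (-Φ θ) / Z θ) : NNReal) : ENNReal) := rfl
  rw [post, hd, integral_smul_measure,
    integral_withDensity_eq_integral_smul
      (f := fun θ => (Real.exp (-Φ θ) / Z θ).toNNReal)
      (measurable_real_toNNReal.comp hmeas) g]
  rw [ENNReal.toReal_inv, ENNReal.toReal_ofReal hC.le, smul_eq_mul]
  congr 1
  apply integral_congr_ae
  filter_upwards with θ
  simp [NNReal.smul_def, Real.coe_toNNReal _ (hnn θ)]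

lemma post_prob {Θ : Type*} [MeasurableSpace Θ] (μ : Measure Θ) {Φ Z : Θ → ℝ}
    (hnn : ∀ θ, 0 ≤ Real.exp (-Φ θ) / Z θ)
    (hint : Integrable (fun θ => Real.exp (-Φ θ) / Z θ) μ)
    (hC : 0 < CZ μ Φ Z) : IsProbabilityMeasure (post μ Φ Z) := by
  constructor
  rw [post, Measure.smul_apply, withDensity_apply _ MeasurableSet.univ, smul_eq_mul,
    setLIntegral_univ, ← ofReal_integral_eq_lintegral_ofReal hint (Filter.Eventually.of_forall hnn)]
  rw [show (∫ θ, Real.exp (-Φ θ) / Z θ ∂μ) = CZ μ Φ Z from rfl]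
  exact ENNReal.inv_mul_cancel (by simpa using hC) ENNReal.ofReal_ne_top

/-- Cauchy–Schwarz for nonnegative functions. -/
lemma cs_aux {Θ : Type*} [MeasurableSpace Θ] (ν : Measure Θ) (u v : Θ → ℝ)
    (hu : AEStronglyMeasurable u ν) (hv : AEStronglyMeasurable v ν)
    (hunn : ∀ θ, 0 ≤ u θ) (hvnn : ∀ θ, 0 ≤ v θ)
    (hu2 : Integrable (fun θ => u θ ^ 2) ν) (hv2 : Integrable (fun θ => v θ ^ 2) ν) :
    ∫ θ, u θ * v θ ∂ν ≤ (∫ θ, u θ ^ 2 ∂ν) ^ ((1:ℝ)/2) * (∫ θ, v θ ^ 2 ∂ν) ^ ((1:ℝ)/2) := by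
  have hpq : Real.HolderConjugate 2 2 := Real.HolderConjugate.two_two
  have hmu : MemLp u (ENNReal.ofReal (2:ℝ)) ν := by
    rw [show ENNReal.ofReal (2:ℝ) = 2 by norm_num]
    exact (memLp_two_iff_integrable_sq hu).mpr hu2
  have hmv : MemLp v (ENNReal.ofReal (2:ℝ)) ν := by
    rw [show ENNReal.ofReal (2:ℝ) = 2 by norm_num]
    exact (memLp_two_iff_integrable_sq hv).mpr hv2
  have h := integral_mul_le_Lp_mul_Lq_of_nonneg hpq (Filter.Eventually.of_forall hunn)
    (Filter.Eventually.of_forall hvnn) hmu hmv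
  have eu : ∫ θ, u θ ^ (2:ℝ) ∂ν = ∫ θ, u θ ^ 2 ∂ν :=
    integral_congr_ae (Filter.Eventually.of_forall fun θ => Real.rpow_two _)
  have ev : ∫ θ, v θ ^ (2:ℝ) ∂ν = ∫ θ, v θ ^ 2 ∂ν :=
    integral_congr_ae (Filter.Eventually.of_forall fun θ => Real.rpow_two _)
  rw [eu, ev] at h
  exact h

theorem wasserstein_stability_close {Θ : Type*} [MetricSpace Θ] [CompleteSpace Θ] [SecondCountableTopology Θ] [Nonempty Θ]
    [MeasurableSpace Θ] [BorelSpace Θ] (μ : Measure Θ) [SigmaFinite μ]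
    (Φ Z Zt : Θ → ℝ) (hΦ : Measurable Φ) (hZ : Measurable Z) (hZt : Measurable Zt)
    (hZpos : ∀ θ, 0 < Z θ) (hZtpos : ∀ θ, 0 < Zt θ)
    (hint : Integrable (fun θ => Real.exp (-Φ θ) / Z θ) μ)
    (hintt : Integrable (fun θ => Real.exp (-Φ θ) / Zt θ) μ)
    (hC : 0 < CZ μ Φ Z) (hCt : 0 < CZ μ Φ Zt)
    (hmom1 : ∀ θ₀ : Θ, Integrable (fun θ => dist θ₀ θ) (post μ Φ Zt))
    (hmom2 : ∀ θ₀ : Θ, Integrable (fun θ => dist θ₀ θ ^ (2 : ℝ)) (post μ Φ Z))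
    (hratio : Integrable (fun θ => (Z θ / Zt θ - 1) ^ 2) (post μ Φ Z))
    (ε : ℝ) (hε0 : 0 < ε) (hε1 : ε < 1)
    (hclose : (∫ θ, |Z θ / Zt θ - 1| ^ 2 ∂(post μ Φ Z)) ^ ((1 : ℝ) / 2) ≤ 1 - ε) :
    wass (post μ Φ Z) (post μ Φ Zt) ≤
      (2 / ε) * momp (post μ Φ Z) 2 *
        (∫ θ, |Z θ / Zt θ - 1| ^ 2 ∂(post μ Φ Z)) ^ ((1 : ℝ) / 2) := by
  have habs : ∀ x : ℝ, |x| ≤ 1 + x ^ 2 := by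
    intro x; nlinarith [sq_nonneg (|x| - 1), sq_abs x, abs_nonneg x]
  set ν := post μ Φ Z with hνdef
  set νt := post μ Φ Zt with hνtdef
  set r : Θ → ℝ := fun θ => Z θ / Zt θ with hrdef
  set N : ℝ := (∫ θ, |r θ - 1| ^ 2 ∂ν) ^ ((1:ℝ)/2) with hNdef
  have hnn : ∀ θ, 0 ≤ Real.exp (-Φ θ) / Z θ :=
    fun θ => div_nonneg (Real.exp_nonneg _) (hZpos θ).le
  have hnnt : ∀ θ, 0 ≤ Real.exp (-Φ θ) / Zt θ :=
    fun θ => div_nonneg (Real.exp_nonneg _) (hZtpos θ).le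
  have hmeasZ : Measurable fun θ => Real.exp (-Φ θ) / Z θ := (hΦ.neg.exp).div hZ
  have hmeasZt : Measurable fun θ => Real.exp (-Φ θ) / Zt θ := (hΦ.neg.exp).div hZt
  have hPν : IsProbabilityMeasure ν := post_prob μ hnn hint hC
  have hPνt : IsProbabilityMeasure νt := post_prob μ hnnt hintt hCt
  have hmr : Measurable r := hZ.div hZt
  -- change of measure
  have hswap : ∀ g : Θ → ℝ,
      ∫ θ, g θ ∂νt = (CZ μ Φ Z / CZ μ Φ Zt) * ∫ θ, r θ * g θ ∂ν := by
    intro g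
    rw [hνtdef, hνdef, integral_post μ hnnt hmeasZt hCt g,
      integral_post μ hnn hmeasZ hC (fun θ => r θ * g θ)]
    have heq : (∫ θ, Real.exp (-Φ θ) / Z θ * (r θ * g θ) ∂μ)
        = ∫ θ, Real.exp (-Φ θ) / Zt θ * g θ ∂μ := by
      apply integral_congr_ae
      filter_upwards with θ
      have h1 : Z θ ≠ 0 := (hZpos θ).ne'
      have h2 : Zt θ ≠ 0 := (hZtpos θ).ne'
      field_simp [hrdef]
      simp only [hrdef]; rw [div_mul_eq_mul_div, div_mul_cancel₀ _ h2]
    rw [heq]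
    field_simp
  set m : ℝ := CZ μ Φ Zt / CZ μ Φ Z with hmdef
  have hm_pos : 0 < m := div_pos hCt hC
  have hm_ne : m ≠ 0 := hm_pos.ne'
  have hm_int : ∫ θ, r θ ∂ν = m := by
    have h := hswap (fun _ => (1:ℝ))
    simp only [mul_one, integral_const, measure_univ, probReal_univ, ENNReal.toReal_one, one_smul] at h
    rw [hmdef]
    field_simp at h ⊢
    linarith [h]
  -- integrability facts for r - 1
  have hr1sq : Integrable (fun θ => (r θ - 1) ^ 2) ν := hratio
  have hr1_meas : AEStronglyMeasurable (fun θ => r θ - 1) ν :=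
    (hmr.sub measurable_const).aestronglyMeasurable
  have hr1abs_meas : AEStronglyMeasurable (fun θ => |r θ - 1|) ν :=
    (hmr.sub measurable_const).abs.aestronglyMeasurable
  have hr1_int : Integrable (fun θ => r θ - 1) ν := by
    refine Integrable.mono' ((integrable_const (1:ℝ)).add hr1sq) hr1_meas ?_
    filter_upwards with θ
    simpa [Real.norm_eq_abs] using habs (r θ - 1)
  have hr_int : Integrable r ν := by
    refine (hr1_int.add (integrable_const (1:ℝ))).congr
      (Filter.Eventually.of_forall fun θ => ?_)
    simp
  have h_m1 : ∫ θ, (r θ - 1) ∂ν = m - 1 := by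
    rw [integral_sub hr_int (integrable_const 1), hm_int]
    simp
  -- Cauchy–Schwarz consequences (per θ₀)
  have habsint : ∀ w : Θ → ℝ, |∫ θ, w θ ∂ν| ≤ ∫ θ, |w θ| ∂ν := by
    intro w
    simpa [Real.norm_eq_abs] using norm_integral_le_integral_norm (μ := ν) w
  have habs_sq : Integrable (fun θ => |r θ - 1| ^ 2) ν :=
    hr1sq.congr (Filter.Eventually.of_forall fun θ => (sq_abs _).symm)
  have hone_sq : Integrable (fun θ => (1:ℝ) ^ 2) ν := by
    simpa using integrable_const (1:ℝ)
  have hone_int : (∫ θ, (1:ℝ) ^ 2 ∂ν) ^ ((1:ℝ)/2) = 1 := by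
    simp
  have hNnn : 0 ≤ N := by
    rw [hNdef]
    exact Real.rpow_nonneg (integral_nonneg fun θ => by positivity) _
  have haN : ∫ θ, |r θ - 1| ∂ν ≤ N := by
    have h := cs_aux ν (fun θ => |r θ - 1|) (fun _ => 1)
      hr1abs_meas aestronglyMeasurable_const (fun θ => abs_nonneg _) (fun _ => zero_le_one)
      habs_sq hone_sq
    rw [hone_int] at h
    rw [hNdef]
    simpa using h
  have hmN : |m - 1| ≤ N := by
    rw [← h_m1]
    exact le_trans (habsint _) haN
  have hm_ge : ε ≤ m := by
    have h1 : N ≤ 1 - ε := hclose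
    have h2 := neg_abs_le (m - 1)
    linarith
  have hεm : m⁻¹ ≤ ε⁻¹ := inv_anti₀ hε0 hm_ge
  -- key bound for each Lipschitz f and each θ₀
  have key : ∀ (f : {f : Θ → ℝ // LipschitzWith 1 f}) (θ₀ : Θ),
      |(∫ θ, f.1 θ ∂ν) - ∫ θ, f.1 θ ∂νt|
        ≤ (2 / ε * N) * ((∫ θ, dist θ₀ θ ^ (2:ℝ) ∂ν) ^ ((1:ℝ)/2)) := by
    intro f θ₀
    set d : Θ → ℝ := fun θ => dist θ₀ θ with hddef
    have hS_eq : (∫ θ, dist θ₀ θ ^ (2:ℝ) ∂ν) ^ ((1:ℝ)/2)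
        = (∫ θ, d θ ^ 2 ∂ν) ^ ((1:ℝ)/2) := by
      congr 1
      exact integral_congr_ae (Filter.Eventually.of_forall fun θ => Real.rpow_two _)
    rw [hS_eq]
    have hd_meas : Measurable d := measurable_const.dist measurable_id
    have hd2 : Integrable (fun θ => d θ ^ 2) ν :=
      (hmom2 θ₀).congr (Filter.Eventually.of_forall fun θ => Real.rpow_two _)
    have hd_int : Integrable d ν := by
      refine Integrable.mono' ((integrable_const (1:ℝ)).add hd2)
        hd_meas.aestronglyMeasurable ?_
      filter_upwards with θ
      simpa [Real.norm_eq_abs] using habs (d θ)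
    have hd_intt : Integrable d νt := hmom1 θ₀
    set S : ℝ := (∫ θ, d θ ^ 2 ∂ν) ^ ((1:ℝ)/2) with hSdef
    have hSnn : 0 ≤ S :=
      Real.rpow_nonneg (integral_nonneg fun θ => by positivity) _
    -- bound ∫ d ≤ S
    have hdS : ∫ θ, d θ ∂ν ≤ S := by
      have h := cs_aux ν d (fun _ => 1) hd_meas.aestronglyMeasurable
        aestronglyMeasurable_const (fun θ => dist_nonneg) (fun _ => zero_le_one) hd2 hone_sq
      rw [hone_int] at h
      rw [hSdef]
      simpa using h
    -- the centered function
    set g : Θ → ℝ := fun θ => f.1 θ - f.1 θ₀ with hgdef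
    have hg_meas : AEStronglyMeasurable g ν :=
      (f.2.continuous.sub continuous_const).aestronglyMeasurable
    have hg_meast : AEStronglyMeasurable g νt :=
      (f.2.continuous.sub continuous_const).aestronglyMeasurable
    have hgd : ∀ θ, |g θ| ≤ d θ := by
      intro θ
      have h := f.2.dist_le_mul θ θ₀
      rw [Real.dist_eq] at h
      simpa [hgdef, hddef, dist_comm θ θ₀] using h
    have hg_int : Integrable g ν := by
      refine Integrable.mono' hd_int hg_meas ?_
      filter_upwards with θ
      simpa [Real.norm_eq_abs] using hgd θ
    have hg_intt : Integrable g νt := by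
      refine Integrable.mono' hd_intt hg_meast ?_
      filter_upwards with θ
      simpa [Real.norm_eq_abs] using hgd θ
    have hbd_int : Integrable (fun θ => ((r θ - 1) ^ 2 + d θ ^ 2) / 2) ν := by
      refine ((hr1sq.add hd2).div_const 2).congr
        (Filter.Eventually.of_forall fun θ => ?_)
      simp [Pi.add_apply]
    have hrg_int : Integrable (fun θ => (r θ - 1) * g θ) ν := by
      refine Integrable.mono' hbd_int
        (hr1_meas.mul hg_meas) ?_
      filter_upwards with θ
      have h1 : |(r θ - 1) * g θ| = |r θ - 1| * |g θ| := abs_mul _ _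
      have h2 : |r θ - 1| * |g θ| ≤ |r θ - 1| * d θ :=
        mul_le_mul_of_nonneg_left (hgd θ) (abs_nonneg _)
      have h3 : |r θ - 1| * d θ ≤ ((r θ - 1) ^ 2 + d θ ^ 2) / 2 := by
        nlinarith [sq_nonneg (|r θ - 1| - d θ), sq_abs (r θ - 1), abs_nonneg (r θ - 1),
          dist_nonneg (x := θ₀) (y := θ)]
      rw [Real.norm_eq_abs, h1]
      linarith
    have habs_rd_int : Integrable (fun θ => |r θ - 1| * d θ) ν := by
      refine Integrable.mono' hbd_int
        (hr1abs_meas.mul hd_meas.aestronglyMeasurable) ?_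
      filter_upwards with θ
      have h3 : |r θ - 1| * d θ ≤ ((r θ - 1) ^ 2 + d θ ^ 2) / 2 := by
        nlinarith [sq_nonneg (|r θ - 1| - d θ), sq_abs (r θ - 1), abs_nonneg (r θ - 1),
          dist_nonneg (x := θ₀) (y := θ)]
      rw [Real.norm_eq_abs, abs_of_nonneg (by positivity)]
      linarith
    -- Cauchy–Schwarz for the cross term
    have hcross : ∫ θ, |r θ - 1| * d θ ∂ν ≤ N * S := by
      have h := cs_aux ν (fun θ => |r θ - 1|) d hr1abs_meas hd_meas.aestronglyMeasurable
        (fun θ => abs_nonneg _) (fun θ => dist_nonneg) habs_sq hd2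
      rw [hNdef, hSdef]
      exact h
    -- reduce to g
    have hcν : ∫ θ, (fun _ => f.1 θ₀) θ ∂ν = f.1 θ₀ := by simp
    have hΔeq : (∫ θ, f.1 θ ∂ν) - ∫ θ, f.1 θ ∂νt = (∫ θ, g θ ∂ν) - ∫ θ, g θ ∂νt := by
      have h1 : ∫ θ, f.1 θ ∂ν = (∫ θ, g θ ∂ν) + f.1 θ₀ := by
        have h := integral_add hg_int (integrable_const (f.1 θ₀) (μ := ν))
        simp only [integral_const, measure_univ, probReal_univ, ENNReal.toReal_one, one_smul] at h
        rw [← h]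
        apply integral_congr_ae
        filter_upwards with θ
        simp [hgdef]
      have h2 : ∫ θ, f.1 θ ∂νt = (∫ θ, g θ ∂νt) + f.1 θ₀ := by
        have h := integral_add hg_intt (integrable_const (f.1 θ₀) (μ := νt))
        simp only [integral_const, measure_univ, probReal_univ, ENNReal.toReal_one, one_smul] at h
        rw [← h]
        apply integral_congr_ae
        filter_upwards with θ
        simp [hgdef]
      rw [h1, h2]
      ring
    -- change of measure for g
    have hswap_g : ∫ θ, g θ ∂νt = m⁻¹ * ∫ θ, r θ * g θ ∂ν := by
      rw [hswap g]
      congr 1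
      rw [hmdef, inv_div]
    have hsplit : ∫ θ, r θ * g θ ∂ν = (∫ θ, (r θ - 1) * g θ ∂ν) + ∫ θ, g θ ∂ν := by
      rw [← integral_add hrg_int hg_int]
      apply integral_congr_ae
      filter_upwards with θ
      ring
    set A : ℝ := ∫ θ, g θ ∂ν with hAdef
    set B : ℝ := ∫ θ, (r θ - 1) * g θ ∂ν with hBdef
    have hA_le : |A| ≤ S := by
      refine le_trans (habsint g) (le_trans ?_ hdS)
      exact integral_mono hg_int.abs hd_int (fun θ => hgd θ)
    have hB_le : |B| ≤ N * S := by
      refine le_trans (habsint _) (le_trans ?_ hcross)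
      refine integral_mono hrg_int.abs habs_rd_int (fun θ => ?_)
      rw [abs_mul]
      exact mul_le_mul_of_nonneg_left (hgd θ) (abs_nonneg _)
    have hΔ2 : A - m⁻¹ * (B + A) = m⁻¹ * ((m - 1) * A - B) := by
      field_simp
      ring
    rw [hΔeq, hswap_g, hsplit, hΔ2]
    rw [abs_mul, abs_inv, abs_of_pos hm_pos]
    have hinner : |(m - 1) * A - B| ≤ N * S + N * S := by
      calc |(m - 1) * A - B| ≤ |(m - 1) * A| + |B| := abs_sub _ _
        _ = |m - 1| * |A| + |B| := by rw [abs_mul]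
        _ ≤ N * S + N * S := by
            refine add_le_add ?_ hB_le
            exact mul_le_mul hmN hA_le (abs_nonneg _) hNnn
    calc m⁻¹ * |(m - 1) * A - B| ≤ ε⁻¹ * (N * S + N * S) := by
          refine mul_le_mul hεm hinner (abs_nonneg _) (by positivity)
      _ = (2 / ε * N) * S := by ring
  -- assemble
  have hcnn : 0 ≤ 2 / ε * N := by positivity
  have key2 : ∀ f : {f : Θ → ℝ // LipschitzWith 1 f},
      |(∫ θ, f.1 θ ∂ν) - ∫ θ, f.1 θ ∂νt| ≤ (2 / ε * N) * momp ν 2 := by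
    intro f
    rcases eq_or_lt_of_le hcnn with h0 | hpos
    · have θ₀ : Θ := Classical.choice ‹Nonempty Θ›
      have h := key f θ₀
      rw [← h0, zero_mul] at h ⊢
      exact h
    · have hdiv : |(∫ θ, f.1 θ ∂ν) - ∫ θ, f.1 θ ∂νt| / (2 / ε * N) ≤ momp ν 2 := by
        simp only [momp]
        refine le_ciInf fun θ₀ => ?_
        rw [div_le_iff₀ hpos]
        have h := key f θ₀
        calc |(∫ θ, f.1 θ ∂ν) - ∫ θ, f.1 θ ∂νt|
            ≤ (2 / ε * N) * ((∫ θ, dist θ₀ θ ^ (2:ℝ) ∂ν) ^ ((1:ℝ)/2)) := h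
          _ = (∫ θ, dist θ₀ θ ^ (2:ℝ) ∂ν) ^ ((1:ℝ)/2) * (2 / ε * N) := by ring
          _ = (∫ θ, dist θ₀ θ ^ (2:ℝ) ∂ν) ^ (1/(2:ℝ)) * (2 / ε * N) := by norm_num
      have := (div_le_iff₀ hpos).mp hdiv
      linarith [this]
  haveI hne : Nonempty {f : Θ → ℝ // LipschitzWith 1 f} :=
    ⟨⟨fun _ => 0, (LipschitzWith.const 0).weaken zero_le_one⟩⟩
  have hfin : wass ν νt ≤ (2 / ε * N) * momp ν 2 := ciSup_le key2
  calc wass ν νt ≤ (2 / ε * N) * momp ν 2 := hfin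
    _ = 2 / ε * momp ν 2 * N := by ring
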